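/- Let m ≥ 1, let π : 𝔽₂^m → 𝔽₂^m be a map with coordinate functions π₀,…,π_{m-1}, and let h : 𝔽₂^m → 𝔽₂ be any Boolean function. Define f on 𝔽₂^m × 𝔽₂^m by f(a,y) = Σ_{i=0}^{m-1} y_i·π_i(a) + h(a). Then f is a bent function on 𝔽₂^{2m} if and only if π is bijective. -/

import Mathlib

/-- The Walsh transform of a Boolean function on `𝔽₂^m × 𝔽₂^m` (identified with `𝔽₂^{2m}`):
`W_f(b) = Σ_{x} (-1)^{f(x) + Σᵢ x.1ᵢ b.1ᵢ + Σᵢ x.2ᵢ b.2ᵢ}`, exponent lifted to `{0,1} ⊆ ℤ`. -/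
def walshTransform2 {m : ℕ} [NeZero m]
    (f : (ZMod m → ZMod 2) × (ZMod m → ZMod 2) → ZMod 2)
    (b : (ZMod m → ZMod 2) × (ZMod m → ZMod 2)) : ℤ :=
  ∑ x : (ZMod m → ZMod 2) × (ZMod m → ZMod 2),
    (-1 : ℤ) ^ (f x + ∑ i : ZMod m, x.1 i * b.1 i + ∑ i : ZMod m, x.2 i * b.2 i).val

/-- `f` on `𝔽₂^m × 𝔽₂^m ≅ 𝔽₂^{2m}` is bent if `W_f(b) = ±2^m` for every `b`. -/
def IsBent2 {m : ℕ} [NeZero m]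
    (f : (ZMod m → ZMod 2) × (ZMod m → ZMod 2) → ZMod 2) : Prop :=
  ∀ b, walshTransform2 f b = 2 ^ m ∨ walshTransform2 f b = -(2 ^ m)

/-!
Write `x = (a, y)`. Summing the Walsh kernel over `y` first is an orthogonality relation for the
characters of `𝔽₂^m`: the inner sum is `2^m` if `π a = b.2` and `0` otherwise. Hence
`W_f(b) = 2^m · Σ_{a ∈ π⁻¹(b.2)} (-1)^{h(a) + a·b.1}`. An empty fibre gives `W_f(b) = 0`, so
bentness forces `π` to be surjective, hence bijective; conversely, when every fibre is a single
point, `W_f(b) = ±2^m`.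
-/

namespace BentFunction

open Finset

def sign (u : ZMod 2) : ℤ := (-1) ^ u.val

lemma sign_add (u v : ZMod 2) : sign (u + v) = sign u * sign v := by
  revert u v; decide

lemma sign_eq_one_or_eq_neg_one (u : ZMod 2) : sign u = 1 ∨ sign u = -1 := by
  revert u; decide

lemma sign_sum {α : Type*} (s : Finset α) (g : α → ZMod 2) :
    sign (∑ i ∈ s, g i) = ∏ i ∈ s, sign (g i) := by
  induction s using Finset.cons_induction with
  | empty => rfl
  | cons i s hi ih => rw [sum_cons, prod_cons, sign_add, ih]

lemma sum_sign_mul (c : ZMod 2) : ∑ t : ZMod 2, sign (t * c) = if c = 0 then 2 else 0 := by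
  revert c; decide

theorem sum_sign_dotProduct {ι : Type*} [Fintype ι] [DecidableEq ι] (c : ι → ZMod 2) :
    ∑ y : ι → ZMod 2, sign (∑ i, y i * c i) = if c = 0 then 2 ^ Fintype.card ι else 0 := by
  simp_rw [sign_sum, ← Fintype.prod_sum fun i t => sign (t * c i), sum_sign_mul,
    Fintype.prod_ite_zero, prod_const, card_univ, funext_iff, Pi.zero_apply]

variable {m : ℕ} [NeZero m]

def maioranaMcFarland (π : (ZMod m → ZMod 2) → (ZMod m → ZMod 2))
    (h : (ZMod m → ZMod 2) → ZMod 2) (x : (ZMod m → ZMod 2) × (ZMod m → ZMod 2)) : ZMod 2 :=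
  ∑ i, x.2 i * π x.1 i + h x.1

variable (π : (ZMod m → ZMod 2) → (ZMod m → ZMod 2)) (h : (ZMod m → ZMod 2) → ZMod 2)

theorem walshTransform2_maioranaMcFarland (b : (ZMod m → ZMod 2) × (ZMod m → ZMod 2)) :
    walshTransform2 (maioranaMcFarland π h) b =
      2 ^ m * ∑ a with π a = b.2, sign (h a + ∑ i, a i * b.1 i) := by
  classical
  -- `π a - b.2 = π a + b.2` in characteristic 2; the difference lets `sub_eq_zero` find the fibre.
  have kernel_split : ∀ a y : ZMod m → ZMod 2,
      maioranaMcFarland π h (a, y) + ∑ i, a i * b.1 i + ∑ i, y i * b.2 i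
        = (h a + ∑ i, a i * b.1 i) + ∑ i, y i * (π a - b.2) i := by
    intro a y
    simp only [maioranaMcFarland, Pi.sub_apply, CharTwo.sub_eq_add, mul_add, sum_add_distrib]
    ring
  calc walshTransform2 (maioranaMcFarland π h) b
      = ∑ a, sign (h a + ∑ i, a i * b.1 i) * ∑ y : ZMod m → ZMod 2,
          sign (∑ i, y i * (π a - b.2) i) := by
        simp_rw [walshTransform2, Fintype.sum_prod_type, mul_sum]
        exact sum_congr rfl fun a _ => sum_congr rfl fun y _ => by
          rw [← sign_add, ← kernel_split]; rfl
    _ = ∑ a, sign (h a + ∑ i, a i * b.1 i) * if π a = b.2 then 2 ^ m else 0 := by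
        simp_rw [sum_sign_dotProduct, sub_eq_zero, ZMod.card]
    _ = 2 ^ m * ∑ a with π a = b.2, sign (h a + ∑ i, a i * b.1 i) := by
        rw [sum_filter, mul_sum]
        exact sum_congr rfl fun a _ => by split_ifs <;> ring

theorem surjective_of_isBent2_maioranaMcFarland (hbent : IsBent2 (maioranaMcFarland π h)) :
    Function.Surjective π := by
  intro c
  by_contra! hc
  have hzero : walshTransform2 (maioranaMcFarland π h) (0, c) = 0 := by
    rw [walshTransform2_maioranaMcFarland, filter_false_of_mem fun a _ => hc a, sum_empty,
      mul_zero]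
  have hpow : (2 : ℤ) ^ m ≠ 0 := by positivity
  rcases hbent (0, c) with hb | hb <;> rw [hzero] at hb <;> omega

theorem isBent2_maioranaMcFarland_of_bijective (hπ : Function.Bijective π) :
    IsBent2 (maioranaMcFarland π h) := by
  intro b
  obtain ⟨a, ha⟩ := hπ.2 b.2
  have hfibre : ({a' | π a' = b.2} : Finset _) = {a} := by
    ext a'
    rw [mem_filter, mem_singleton, ← ha]
    exact ⟨fun h' => hπ.1 h'.2, fun h' => ⟨mem_univ _, h' ▸ rfl⟩⟩
  rw [walshTransform2_maioranaMcFarland, hfibre, sum_singleton]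
  rcases sign_eq_one_or_eq_neg_one (h a + ∑ i, a i * b.1 i) with hs | hs <;> rw [hs] <;> simp

end BentFunction

open BentFunction in
theorem statement12_general (m : ℕ) [NeZero m]
    (π : (ZMod m → ZMod 2) → (ZMod m → ZMod 2))
    (h : (ZMod m → ZMod 2) → ZMod 2)
    (f : (ZMod m → ZMod 2) × (ZMod m → ZMod 2) → ZMod 2)
    (hf : ∀ (a y : ZMod m → ZMod 2),
      f (a, y) = ∑ i : ZMod m, y i * π a i + h a) :
    IsBent2 f ↔ Function.Bijective π := by
  obtain rfl : f = maioranaMcFarland π h := funext fun ⟨a, y⟩ => hf a y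
  refine ⟨fun hbent => ?_, isBent2_maioranaMcFarland_of_bijective π h⟩
  have hsurj := surjective_of_isBent2_maioranaMcFarland π h hbent
  exact ⟨Finite.injective_iff_surjective.mpr hsurj, hsurj⟩

/-- Maiorana–McFarland: with `m ≥ 1`, `π : 𝔽₂^m → 𝔽₂^m` with coordinate
functions `πᵢ`, and any Boolean function `h` on `𝔽₂^m`, the function
`f(a,y) = Σ_{i=0}^{m-1} yᵢ·πᵢ(a) + h(a)` is bent on `𝔽₂^{2m}` iff `π` is bijective. -/
theorem statement12 (m : ℕ) (hm : 1 ≤ m) [NeZero m]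
    (π : (ZMod m → ZMod 2) → (ZMod m → ZMod 2))
    (h : (ZMod m → ZMod 2) → ZMod 2)
    (f : (ZMod m → ZMod 2) × (ZMod m → ZMod 2) → ZMod 2)
    (hf : ∀ (a y : ZMod m → ZMod 2),
      f (a, y) = ∑ i : ZMod m, y i * π a i + h a) :
    IsBent2 f ↔ Function.Bijective π :=
  statement12_general m π h f hf
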